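/- Let q ∈ (0,1) ∪ (1,2], λ_k ≥ 0 with ∑_k λ_k = 1, and probability vectors p^{(k)} in ℝ^d. Then (1/(1-q))·(1 − ∑_j (∑_k λ_k^q p^{(k)}_j)^{1/q}) ≤ ∑_k λ_k · (1/(1-q))·(1 − ∑_j (p^{(k)}_j)^{1/q}). That is, C_q^II(ρ) ≤ C_q^V(ρ). -/

import Mathlib

/-!
Writing `a_k = λ_k ^ q p_k(j)`, the two sides compare `∑_j (∑_k a_k) ^ (1/q)` with
`∑_j ∑_k a_k ^ (1/q)`, because `a_k ^ (1/q) = λ_k p_k(j) ^ (1/q)` and `∑_k λ_k = 1`.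
For `q < 1` the map `t ↦ t ^ (1/q)` is superadditive on `[0, ∞)` and `1/(1-q) > 0`; for `q > 1`
it is subadditive and `1/(1-q) < 0`.
-/

open Finset

namespace Real

variable {ι : Type*}

theorem rpow_sum_le_sum_rpow (s : Finset ι) {r : ℝ} (hr0 : 0 < r) (hr1 : r ≤ 1) {x : ι → ℝ}
    (hx : ∀ i ∈ s, 0 ≤ x i) : (∑ i ∈ s, x i) ^ r ≤ ∑ i ∈ s, x i ^ r :=
  le_sum_of_subadditive_on_pred (· ^ r) (0 ≤ ·) (by simp [zero_rpow hr0.ne'])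
    (fun _ _ ha hb => rpow_add_le_add_rpow ha hb hr0.le hr1) (fun _ _ => add_nonneg) x hx

theorem sum_rpow_le_rpow_sum (s : Finset ι) {r : ℝ} (hr : 1 ≤ r) {x : ι → ℝ}
    (hx : ∀ i ∈ s, 0 ≤ x i) : ∑ i ∈ s, x i ^ r ≤ (∑ i ∈ s, x i) ^ r := by
  have hr0 : 0 < r := by linarith
  have h := rpow_sum_le_sum_rpow s (inv_pos.2 hr0) (inv_le_one_of_one_le₀ hr)
    (fun i hi => rpow_nonneg (hx i hi) r)
  rw [sum_congr rfl fun i hi => rpow_rpow_inv (hx i hi) hr0.ne'] at h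
  calc ∑ i ∈ s, x i ^ r = ((∑ i ∈ s, x i ^ r) ^ r⁻¹) ^ r :=
        (rpow_inv_rpow (sum_nonneg fun i hi => rpow_nonneg (hx i hi) r) hr0.ne').symm
    _ ≤ (∑ i ∈ s, x i) ^ r :=
        rpow_le_rpow (rpow_nonneg (sum_nonneg fun i hi => rpow_nonneg (hx i hi) r) _) h hr0.le

theorem rpow_mul_rpow_one_div {a x q : ℝ} (ha : 0 ≤ a) (hx : 0 ≤ x) (hq : q ≠ 0) :
    (a ^ q * x) ^ (1 / q) = a * x ^ (1 / q) := by
  rw [mul_rpow (rpow_nonneg ha q) hx, ← rpow_mul ha, mul_one_div_cancel hq, rpow_one]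

end Real

theorem tsallis_coherenceII_le_coherenceV_general (d m : ℕ) (q : ℝ)
    (hq : (0 < q ∧ q < 1) ∨ (1 < q ∧ q ≤ 2))
    (lam : Fin m → ℝ) (hl : ∀ k, 0 ≤ lam k) (hls : ∑ k, lam k = 1)
    (p : Fin m → Fin d → ℝ) (hp : ∀ k j, 0 ≤ p k j) :
    (1 / (1 - q)) * (1 - ∑ j, (∑ k, (lam k) ^ q * p k j) ^ (1 / q))
      ≤ ∑ k, lam k * ((1 / (1 - q)) * (1 - ∑ j, (p k j) ^ (1 / q))) := by
  have hq0 : 0 < q := by rcases hq with ⟨h, _⟩ | ⟨h, _⟩ <;> linarith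
  have hlp : ∀ j k, 0 ≤ lam k ^ q * p k j :=
    fun j k => mul_nonneg (Real.rpow_nonneg (hl k) q) (hp k j)
  have hpow : ∀ j k, (lam k ^ q * p k j) ^ (1 / q) = lam k * p k j ^ (1 / q) :=
    fun j k => Real.rpow_mul_rpow_one_div (hl k) (hp k j) hq0.ne'
  have hrhs : ∑ k, lam k * ((1 / (1 - q)) * (1 - ∑ j, p k j ^ (1 / q)))
      = (1 / (1 - q)) * (1 - ∑ j, ∑ k, (lam k ^ q * p k j) ^ (1 / q)) := by
    simp only [hpow, mul_sub, mul_one, mul_sum, sum_sub_distrib, ← sum_mul, hls]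
    rw [one_mul, sum_comm]
    simp only [mul_left_comm]
  rw [hrhs]
  rcases hq with ⟨-, hq1⟩ | ⟨hq1, -⟩
  · refine mul_le_mul_of_nonneg_left (sub_le_sub_left (sum_le_sum fun j _ => ?_) 1) ?_
    · exact Real.sum_rpow_le_rpow_sum _ ((le_div_iff₀ hq0).2 (by linarith)) fun k _ => hlp j k
    · exact one_div_nonneg.2 (by linarith)
  · refine mul_le_mul_of_nonpos_left (sub_le_sub_left (sum_le_sum fun j _ => ?_) 1) ?_
    · exact Real.rpow_sum_le_sum_rpow _ (one_div_pos.2 hq0) ((div_le_one hq0).2 hq1.le)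
        fun k _ => hlp j k
    · exact one_div_nonpos.2 (by linarith)

/-- C_q^II on a mixture is at most the convex combination of C_q^II on the components:
C_q^II(ρ) ≤ C_q^V(ρ), for q ∈ (0,1) ∪ (1,2]. -/
theorem tsallis_coherenceII_le_coherenceV (d m : ℕ) (q : ℝ)
    (hq : (0 < q ∧ q < 1) ∨ (1 < q ∧ q ≤ 2))
    (lam : Fin m → ℝ) (hl : ∀ k, 0 ≤ lam k) (hls : ∑ k, lam k = 1)
    (p : Fin m → Fin d → ℝ) (hp : ∀ k j, 0 ≤ p k j) (hps : ∀ k, ∑ j, p k j = 1) :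
    (1 / (1 - q)) * (1 - ∑ j, (∑ k, (lam k) ^ q * p k j) ^ (1 / q))
      ≤ ∑ k, lam k * ((1 / (1 - q)) * (1 - ∑ j, (p k j) ^ (1 / q))) :=
  tsallis_coherenceII_le_coherenceV_general d m q hq lam hl hls p hp
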